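/- Suppose a quiver Q admits an attractor solution, i.e., points (r⃗_i)_{i∈Q0} in ℝ³ with pairwise distinct positions along arrows, such that for every vertex i: Σ_{a:i→j} (1 + 1/r_{ij}) − Σ_{a:j→i} (1 + 1/r_{ij}) = 0 where r_{ij} = |r⃗_i − r⃗_j|. Then for every weak cut I of Q one has the strict inequality |I| < |Q1 − I| whenever some simple cycle contains no arrow of I, and in general |I| ≤ |Q1 − I|. -/

import Mathlib

/-!
Put `λ a = 1 + 1 / r a` on every arrow `a`, where `r a` is the distance between its endpoints:
the attractor equations say that `λ` is a conserved current, and `λ ≥ 1`. Weight each arrow by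
`± 1 / λ a = ± r a / (1 + r a)`, negative exactly on `I`, so that pairing the weights with `λ`
gives `|Q₁ - I| - |I|`. On a simple cycle the polygon inequality `r a ≤ ∑_{b ≠ a} r b` together
with the monotonicity and subadditivity of `x ↦ x / (1 + x)` makes the total weight nonnegative,
since a weak cut meets the cycle at most once. A nonnegative conserved current is a nonnegative
combination of simple cycles (peel off one in its support at a time), so its pairing with the
weights is nonnegative. For strictness peel off once a simple cycle avoiding `I`, whose weight is
positive.
-/
open Relation

/-- One directed step along an arrow of the quiver. -/
def QStep {V A : Type} (s t : A → V) (i j : V) : Prop := ∃ a : A, s a = i ∧ t a = j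

/-- One undirected step along an arrow of the quiver. -/
def UStep {V A : Type} (s t : A → V) (i j : V) : Prop :=
  ∃ a : A, (s a = i ∧ t a = j) ∨ (s a = j ∧ t a = i)

/-- A current is conserved if at each vertex the incoming total equals the outgoing total. -/
def Conserved {V A : Type} [Fintype A] [DecidableEq V] (s t : A → V) (lam : A → ℝ) : Prop :=
  ∀ i : V, ∑ a ∈ Finset.univ.filter (fun a => t a = i), lam a
         = ∑ a ∈ Finset.univ.filter (fun a => s a = i), lam a

/-- A simple oriented cycle of the quiver: a nonempty cyclically composable list of arrows
whose sources are pairwise distinct. -/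
structure SimpleCycle {V A : Type} (s t : A → V) where
  arrows : List A
  nonempty : arrows ≠ []
  chain : ∀ k : ℕ, ∀ h : k < arrows.length,
    t (arrows.get ⟨k, h⟩) =
      s (arrows.get ⟨(k + 1) % arrows.length, Nat.mod_lt _ (List.length_pos_iff.mpr nonempty)⟩)
  simple : (arrows.map s).Nodup

/-- A cut: every simple oriented cycle contains exactly one arrow of `I`. -/
def IsCut {V A : Type} [DecidableEq A] (s t : A → V) (I : Finset A) : Prop :=
  ∀ w : SimpleCycle s t, (w.arrows.filter (fun a => decide (a ∈ I))).length = 1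

/-- A weak cut: every simple oriented cycle contains at most one arrow of `I`. -/
def IsWeakCut {V A : Type} [DecidableEq A] (s t : A → V) (I : Finset A) : Prop :=
  ∀ w : SimpleCycle s t, (w.arrows.filter (fun a => decide (a ∈ I))).length ≤ 1

/-- An R-charge: a real function on arrows summing to 2 around every simple oriented cycle. -/
def IsRCharge {V A : Type} (s t : A → V) (R : A → ℝ) : Prop :=
  ∀ w : SimpleCycle s t, (w.arrows.map R).sum = 2


open Finset

theorem inv_one_add_inv_le_sum {ι : Type*} (T : Finset ι) (d : ι → ℝ) (hd : ∀ j ∈ T, 0 < d j)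
    {x : ℝ} (hx : 0 < x) (hle : x ≤ ∑ j ∈ T, d j) :
    (1 + x⁻¹)⁻¹ ≤ ∑ j ∈ T, (1 + (d j)⁻¹)⁻¹ := by
  have hform : ∀ y : ℝ, 0 < y → (1 + y⁻¹)⁻¹ = y / (1 + y) := fun y hy => by field_simp; ring
  set S := ∑ j ∈ T, d j
  have hdS : ∀ j ∈ T, d j ≤ S := fun j hj =>
    single_le_sum (fun i hi => (hd i hi).le) hj
  calc (1 + x⁻¹)⁻¹ = x / (1 + x) := hform x hx
    _ ≤ S / (1 + S) := by rw [div_le_div_iff₀ (by positivity) (by linarith)]; nlinarith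
    _ = ∑ j ∈ T, d j / (1 + S) := sum_div ..
    _ ≤ ∑ j ∈ T, d j / (1 + d j) := sum_le_sum fun j hj =>
        div_le_div_of_nonneg_left (hd j hj).le (by linarith [hd j hj]) (by linarith [hdS j hj])
    _ = ∑ j ∈ T, (1 + (d j)⁻¹)⁻¹ := sum_congr rfl fun j hj => (hform _ (hd j hj)).symm

open Fin.NatCast Fin.CommRing in
theorem dist_le_sum_erase_dist_add_one {E : Type*} [PseudoMetricSpace E] {L : ℕ} [NeZero L]
    (p : Fin L → E) (k : Fin L) :
    dist (p k) (p (k + 1)) ≤ ∑ j ∈ univ.erase k, dist (p j) (p (j + 1)) := by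
  set d : Fin L → ℝ := fun j => dist (p j) (p (j + 1))
  have hL : L = (L - 1) + 1 := (Nat.sub_add_cancel NeZero.one_le).symm
  have hlast : k + 1 + ((L - 1 : ℕ) : Fin L) = k := by
    rw [Nat.cast_sub NeZero.one_le, Fin.natCast_self]; ring
  have hround : ∑ m ∈ range (L - 1), d (k + 1 + m) + d k = ∑ j, d j := by
    have hk : d k = d (k + 1 + ((L - 1 : ℕ) : Fin L)) := by rw [hlast]
    rw [hk, ← sum_range_succ (fun m : ℕ => d (k + 1 + m)), ← hL,
      ← Fin.sum_univ_eq_sum_range (fun m => d (k + 1 + m))]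
    simp only [Fin.cast_val_eq_self]
    exact Equiv.sum_comp (Equiv.addLeft (k + 1)) d
  have hpath := dist_le_range_sum_dist (fun m : ℕ => p (k + 1 + m)) (L - 1)
  simp only [hlast, Nat.cast_add, Nat.cast_one, Nat.cast_zero, add_zero, ← add_assoc] at hpath
  rw [sum_erase_eq_sub (mem_univ k), ← hround, add_sub_cancel_right, dist_comm]
  exact hpath

namespace SimpleCycle

variable {V A : Type} {s t : A → V} (w : SimpleCycle s t)

theorem nodup : w.arrows.Nodup := w.simple.of_map s

instance : NeZero w.arrows.length := ⟨(List.length_pos_iff.mpr w.nonempty).ne'⟩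

open Fin.NatCast Fin.CommRing in
theorem target_get (k : Fin w.arrows.length) :
    t (w.arrows.get k) = s (w.arrows.get (k + 1)) := by
  rw [w.chain k k.isLt]
  congr 2
  ext
  simp [Fin.val_add, Nat.add_mod_mod]

theorem map_target_eq_rotate : w.arrows.map t = (w.arrows.map s).rotate 1 := by
  refine List.ext_getElem (by simp) fun k hk _ => ?_
  simp only [List.getElem_map, List.getElem_rotate, List.length_map]
  exact w.chain k (by simpa using hk)

theorem sum_map_target (φ : V → ℝ) :
    (w.arrows.map (φ ∘ t)).sum = (w.arrows.map (φ ∘ s)).sum := by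
  rw [← List.map_map, ← List.map_map, map_target_eq_rotate]
  exact ((List.rotate_perm _ 1).map φ).sum_eq

variable [DecidableEq A]

theorem sum_toFinset_eq_sum_get {M : Type*} [AddCommMonoid M] (f : A → M) :
    ∑ a ∈ w.arrows.toFinset, f a = ∑ k : Fin w.arrows.length, f (w.arrows.get k) := by
  rw [List.sum_toFinset _ w.nodup, ← Fin.sum_univ_fun_getElem w.arrows f]
  rfl

theorem dist_le_sum_erase {E : Type*} [PseudoMetricSpace E] (r : V → E) {a : A}
    (ha : a ∈ w.arrows) :
    dist (r (s a)) (r (t a)) ≤ ∑ b ∈ w.arrows.toFinset.erase a, dist (r (s b)) (r (t b)) := by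
  obtain ⟨k, rfl⟩ := List.mem_iff_get.mp ha
  have hpoly := dist_le_sum_erase_dist_add_one (fun j => r (s (w.arrows.get j))) k
  simp only [← target_get] at hpoly
  rwa [sum_erase_eq_sub (List.mem_toFinset.mpr ha), sum_toFinset_eq_sum_get,
    ← sum_erase_eq_sub (mem_univ k)]

theorem conserved_indicator [Fintype A] [DecidableEq V] (c : ℝ) :
    Conserved s t (fun a => if a ∈ w.arrows then c else 0) := by
  have hcount : ∀ (f : A → V) (i : V),
      ∑ a ∈ univ.filter (fun a => f a = i), (if a ∈ w.arrows then c else 0) =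
        (w.arrows.map ((fun v => if v = i then c else 0) ∘ f)).sum := by
    intro f i
    rw [sum_filter, ← List.sum_toFinset _ w.nodup, ← univ_inter w.arrows.toFinset,
      ← sum_ite_mem]
    refine sum_congr rfl fun a _ => ?_
    by_cases ha : a ∈ w.arrows <;> simp [ha]
  intro i
  rw [hcount, hcount, sum_map_target]

theorem sum_mul_eq_sum_mul_sub_indicator_add [Fintype A] (g lam : A → ℝ) (c : ℝ) :
    ∑ a, g a * lam a =
      ∑ a, g a * (lam a - if a ∈ w.arrows then c else 0) + c * ∑ a ∈ w.arrows.toFinset, g a := by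
  have hcycle :
      ∑ a, g a * (if a ∈ w.arrows then c else 0) = c * ∑ a ∈ w.arrows.toFinset, g a := by
    rw [mul_sum, ← univ_inter w.arrows.toFinset, ← sum_ite_mem]
    refine sum_congr rfl fun a _ => ?_
    by_cases ha : a ∈ w.arrows <;> simp [ha, mul_comm]
  simp only [mul_sub, sum_sub_distrib, hcycle, sub_add_cancel]

end SimpleCycle

section CycleExtraction

variable {V A : Type} {s t : A → V}

theorem exists_simpleCycle_of_chain [Finite A] (f : ℕ → A)
    (hf : ∀ n, t (f n) = s (f (n + 1))) :
    ∃ w : SimpleCycle s t, ∀ a ∈ w.arrows, ∃ n, f n = a := by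
  classical
  have hex : ∃ l, ∃ k < l, s (f k) = s (f l) := by
    obtain ⟨m, n, hmn, heq⟩ := Finite.exists_ne_map_eq_of_infinite f
    rcases hmn.lt_or_gt with h | h
    · exact ⟨n, m, h, congrArg s heq⟩
    · exact ⟨m, n, h, congrArg s heq.symm⟩
  -- the first return of the source sequence to an earlier vertex closes a simple cycle
  obtain ⟨k, hkl, hret⟩ := Nat.find_spec hex
  set l := Nat.find hex
  have hmin : ∀ j < l, ∀ i < j, s (f i) ≠ s (f j) := fun j hj i hi h =>
    Nat.find_min hex hj ⟨i, hi, h⟩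
  refine ⟨⟨List.ofFn (fun m : Fin (l - k) => f (k + m)), ?_, ?_, ?_⟩, ?_⟩
  · simp only [ne_eq, List.ofFn_eq_nil_iff]
    omega
  · intro m hm
    simp only [List.get_eq_getElem, List.getElem_ofFn, List.length_ofFn] at hm ⊢
    rw [hf, add_assoc]
    by_cases hm1 : m + 1 < l - k
    · rw [Nat.mod_eq_of_lt hm1]
    · rw [show m + 1 = l - k by omega, Nat.mod_self, add_zero, show k + (l - k) = l by omega,
        hret]
  · rw [List.map_ofFn]
    refine List.nodup_ofFn_ofInjective fun i j hij => Fin.ext ?_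
    simp only [Function.comp_apply] at hij
    by_contra hne
    rcases lt_or_gt_of_ne hne with h | h
    · exact hmin (k + j) (by omega) (k + i) (by omega) hij
    · exact hmin (k + i) (by omega) (k + j) (by omega) hij.symm
  · intro a ha
    obtain ⟨m, rfl⟩ := List.mem_ofFn.mp ha
    exact ⟨_, rfl⟩

theorem exists_simpleCycle_of_forall_exists_next [Finite A] (P : A → Prop)
    (hP : ∀ a, P a → ∃ b, P b ∧ s b = t a) {a₀ : A} (h₀ : P a₀) :
    ∃ w : SimpleCycle s t, ∀ a ∈ w.arrows, P a := by
  choose next hnextP hnext using hP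
  let step : {a // P a} → {a // P a} := fun a => ⟨next a.1 a.2, hnextP a.1 a.2⟩
  let f : ℕ → A := fun n => (step^[n] ⟨a₀, h₀⟩).1
  obtain ⟨w, hw⟩ := exists_simpleCycle_of_chain (s := s) (t := t) f fun n => by
    simp only [f, Function.iterate_succ_apply', step, hnext]
  refine ⟨w, fun a ha => ?_⟩
  obtain ⟨n, rfl⟩ := hw a ha
  exact (step^[n] ⟨a₀, h₀⟩).2

end CycleExtraction

section Currents

variable {V A : Type} [Fintype A] [DecidableEq V] {s t : A → V}

theorem Conserved.sub {f g : A → ℝ} (hf : Conserved s t f) (hg : Conserved s t g) :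
    Conserved s t (fun a => f a - g a) := fun i => by
  rw [sum_sub_distrib, sum_sub_distrib, hf i, hg i]

theorem Conserved.exists_next_pos {lam : A → ℝ} (hlam : Conserved s t lam)
    (hnn : ∀ a, 0 ≤ lam a) {a : A} (ha : 0 < lam a) : ∃ b, 0 < lam b ∧ s b = t a := by
  by_contra! hnext
  have hin : 0 < ∑ b ∈ univ.filter (fun b => t b = t a), lam b :=
    ha.trans_le (single_le_sum (fun b _ => hnn b) (by simp))
  have hout : ∑ b ∈ univ.filter (fun b => s b = t a), lam b ≤ 0 :=
    sum_nonpos fun b hb => not_lt.mp fun hb' => hnext b hb' (mem_filter.mp hb).2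
  linarith [hlam (t a)]

variable [DecidableEq A]

theorem sum_mul_nonneg_of_conserved (g : A → ℝ)
    (hg : ∀ w : SimpleCycle s t, 0 ≤ ∑ a ∈ w.arrows.toFinset, g a) {lam : A → ℝ}
    (hlam : Conserved s t lam) (hnn : ∀ a, 0 ≤ lam a) : 0 ≤ ∑ a, g a * lam a := by
  induction hn : (univ.filter fun a => 0 < lam a).card using Nat.strong_induction_on
    generalizing lam with
  | _ n ih =>
  by_cases hzero : ∀ a, lam a = 0
  · simp [hzero]
  push Not at hzero
  obtain ⟨a₀, ha₀⟩ := hzero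
  obtain ⟨w, hw⟩ := exists_simpleCycle_of_forall_exists_next (fun a => 0 < lam a)
    (fun a ha => hlam.exists_next_pos hnn ha) ((hnn a₀).lt_of_ne' ha₀)
  have hne : w.arrows.toFinset.Nonempty := by simpa using w.nonempty
  -- peel off the cycle with the largest multiple that keeps the current nonnegative
  obtain ⟨amin, hamin, hmin⟩ := exists_mem_eq_inf' hne lam
  set c := w.arrows.toFinset.inf' hne lam
  have hc : ∀ a ∈ w.arrows, c ≤ lam a := fun a ha => inf'_le _ (List.mem_toFinset.mpr ha)
  set lam' : A → ℝ := fun a => lam a - if a ∈ w.arrows then c else 0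
  have hnn' : ∀ a, 0 ≤ lam' a := fun a => by
    by_cases ha : a ∈ w.arrows <;> simp [lam', ha, hc, hnn]
  have hsupp : univ.filter (fun a => 0 < lam' a) ⊂ univ.filter (fun a => 0 < lam a) := by
    refine ssubset_iff_of_subset (fun a => ?_) |>.mpr ⟨amin, ?_, ?_⟩
    · by_cases ha : a ∈ w.arrows
      · simp [hw a ha]
      · simp [lam', ha]
    · simpa using hw amin (List.mem_toFinset.mp hamin)
    · simp [lam', List.mem_toFinset.mp hamin, ← hmin]
  have hrest := ih _ (hn ▸ card_lt_card hsupp) (hlam.sub (w.conserved_indicator c)) hnn' rfl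
  rw [w.sum_mul_eq_sum_mul_sub_indicator_add g lam c]
  exact add_nonneg hrest (mul_nonneg (hmin ▸ hnn amin) (hg w))

theorem le_sum_mul_of_conserved (g : A → ℝ)
    (hg : ∀ w : SimpleCycle s t, 0 ≤ ∑ a ∈ w.arrows.toFinset, g a) {lam : A → ℝ}
    (hlam : Conserved s t lam) (hnn : ∀ a, 0 ≤ lam a) (w : SimpleCycle s t) {c : ℝ}
    (hc : ∀ a ∈ w.arrows, c ≤ lam a) :
    c * ∑ a ∈ w.arrows.toFinset, g a ≤ ∑ a, g a * lam a := by
  have hrest := sum_mul_nonneg_of_conserved g hg (hlam.sub (w.conserved_indicator c)) fun a => by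
    by_cases ha : a ∈ w.arrows <;> simp [ha, hc, hnn]
  linarith [w.sum_mul_eq_sum_mul_sub_indicator_add g lam c]

end Currents

theorem sum_ite_mem_neg_inv_mul_self {A : Type} [Fintype A] [DecidableEq A] (I : Finset A)
    (f : A → ℝ) (hf : ∀ a, f a ≠ 0) :
    ∑ a, (if a ∈ I then -(f a)⁻¹ else (f a)⁻¹) * f a = (Iᶜ.card : ℝ) - I.card := by
  simp only [ite_mul, neg_mul, inv_mul_cancel₀ (hf _)]
  simp [sum_ite, filter_not, compl_eq_univ_sdiff]
  ring

namespace IsWeakCut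

variable {V A : Type} [DecidableEq A] {s t : A → V} {I : Finset A}

theorem eq_of_mem (hI : IsWeakCut s t I) (w : SimpleCycle s t) {a b : A}
    (ha : a ∈ w.arrows) (haI : a ∈ I) (hb : b ∈ w.arrows) (hbI : b ∈ I) : a = b :=
  card_le_one.mp ((List.toFinset_card_le _).trans (hI w)) a (by simp [ha, haI]) b
    (by simp [hb, hbI])

theorem sum_signed_nonneg {E : Type*} [MetricSpace E] (r : V → E)
    (hd : ∀ a, r (s a) ≠ r (t a)) (hI : IsWeakCut s t I) (w : SimpleCycle s t) :
    0 ≤ ∑ a ∈ w.arrows.toFinset, if a ∈ I then -(1 + (dist (r (s a)) (r (t a)))⁻¹)⁻¹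
      else (1 + (dist (r (s a)) (r (t a)))⁻¹)⁻¹ := by
  have hpos : ∀ a, 0 < dist (r (s a)) (r (t a)) := fun a => dist_pos.mpr (hd a)
  by_cases hmeet : ∃ a ∈ w.arrows, a ∈ I
  · obtain ⟨a, ha, haI⟩ := hmeet
    have hrest : ∀ b ∈ w.arrows.toFinset.erase a, b ∉ I := fun b hb hbI =>
      (mem_erase.mp hb).1
        (hI.eq_of_mem w ha haI (List.mem_toFinset.mp (mem_of_mem_erase hb)) hbI).symm
    rw [← add_sum_erase _ _ (List.mem_toFinset.mpr ha), if_pos haI,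
      sum_congr rfl fun b hb => if_neg (hrest b hb)]
    linarith [inv_one_add_inv_le_sum _ _ (fun b _ => hpos b) (hpos a) (w.dist_le_sum_erase r ha)]
  · push Not at hmeet
    exact sum_nonneg fun a ha => by
      rw [if_neg (hmeet a (List.mem_toFinset.mp ha))]
      positivity

end IsWeakCut

theorem stmt14_general {V A : Type} [Fintype A] [DecidableEq V] [DecidableEq A]
    (s t : A → V) (r : V → EuclideanSpace ℝ (Fin 3))
    (hd : ∀ a : A, r (s a) ≠ r (t a))
    (hdenef : ∀ i : V,
      ∑ a ∈ Finset.univ.filter (fun a => s a = i), (1 + (dist (r (s a)) (r (t a)))⁻¹)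
      - ∑ a ∈ Finset.univ.filter (fun a => t a = i), (1 + (dist (r (s a)) (r (t a)))⁻¹) = 0) :
    ∀ I : Finset A, IsWeakCut s t I →
      I.card ≤ Iᶜ.card ∧
      ((∃ w : SimpleCycle s t, ∀ a ∈ w.arrows, a ∉ I) → I.card < Iᶜ.card) := by
  intro I hI
  set lam : A → ℝ := fun a => 1 + (dist (r (s a)) (r (t a)))⁻¹
  have hlam : ∀ a, 1 ≤ lam a := fun a => le_add_of_nonneg_right (inv_nonneg.mpr dist_nonneg)
  have hnn : ∀ a, 0 ≤ lam a := fun a => zero_le_one.trans (hlam a)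
  have hcons : Conserved s t lam := fun i => (sub_eq_zero.mp (hdenef i)).symm
  set g : A → ℝ := fun a => if a ∈ I then -(lam a)⁻¹ else (lam a)⁻¹
  have hg : ∀ w : SimpleCycle s t, 0 ≤ ∑ a ∈ w.arrows.toFinset, g a := hI.sum_signed_nonneg r hd
  have hpair : ∑ a, g a * lam a = (Iᶜ.card : ℝ) - I.card :=
    sum_ite_mem_neg_inv_mul_self I lam fun a => (zero_lt_one.trans_le (hlam a)).ne'
  refine ⟨?_, fun ⟨w, hw⟩ => ?_⟩
  · have := sum_mul_nonneg_of_conserved g hg hcons hnn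
    exact_mod_cast (by linarith : (I.card : ℝ) ≤ Iᶜ.card)
  · have hw_pos : 0 < ∑ a ∈ w.arrows.toFinset, g a := sum_pos
      (fun a ha => by simp only [g, if_neg (hw a (List.mem_toFinset.mp ha))]; positivity)
      (by simpa using w.nonempty)
    have := le_sum_mul_of_conserved g hg hcons hnn w (c := 1) fun a _ => hlam a
    exact_mod_cast (by linarith : (I.card : ℝ) < Iᶜ.card)

/-- If a quiver admits an attractor solution (points in `ℝ³` with distinct endpoints
along arrows satisfying the attractor Denef equations), then every weak cut `I`
satisfies `|I| ≤ |Q₁ − I|`, with strict inequality whenever some simple oriented cycle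
contains no arrow of `I`. -/
theorem stmt14 {V A : Type} [Fintype V] [Fintype A] [DecidableEq V] [DecidableEq A]
    (s t : A → V) (r : V → EuclideanSpace ℝ (Fin 3))
    (hd : ∀ a : A, r (s a) ≠ r (t a))
    (hdenef : ∀ i : V,
      ∑ a ∈ Finset.univ.filter (fun a => s a = i), (1 + (dist (r (s a)) (r (t a)))⁻¹)
      - ∑ a ∈ Finset.univ.filter (fun a => t a = i), (1 + (dist (r (s a)) (r (t a)))⁻¹) = 0) :
    ∀ I : Finset A, IsWeakCut s t I →
      I.card ≤ Iᶜ.card ∧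
      ((∃ w : SimpleCycle s t, ∀ a ∈ w.arrows, a ∉ I) → I.card < Iᶜ.card) :=
  stmt14_general s t r hd hdenef
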